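/- Let r ≥ 1 and let ξ = (ξ_0, …, ξ_r) ∈ ℝ^{r+1} satisfy dim_ℚ Span_ℚ(ξ_0, …, ξ_r) ≥ 2. Then τ_r(ξ) ≤ 1/ω_0(ξ). Here τ_r(ξ) = sup T_r(ξ) (with sup ∅ = 0), where T_r(ξ) is the set of all τ > 0 for which there exists a sequence (L_n) of linear forms L = ℓ_0 X_0 + ⋯ + ℓ_r X_r with integer coefficients such that L_n(ξ) ≠ 0 for all n, L_n(ξ) → 0, |L_{n+1}(ξ)| = |L_n(ξ)|^{1+o(1)}, and |L_n(ξ)| ≤ H(L_n)^{−τ+o(1)}, with H(L) = max_{0≤i≤r} |ℓ_i|; and ω_0(ξ) is the supremum of all ω > 0 such that there exist infinitely many tuples (q_0, …, q_r) ∈ ℤ^{r+1} with |q_i ξ_j − q_j ξ_i| ≤ max(|q_0|, …, |q_r|)^{−ω} for all 0 ≤ i < j ≤ r. -/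

import Mathlib

open Filter Topology

/-- The height `H(L) = max_i |ℓ_i|` of an integer linear form `L = ℓ_0 X_0 + ⋯`. -/
def heightLF {n : ℕ} (L : Fin n → ℤ) : ℝ :=
  ((Finset.univ.sup fun i => (L i).natAbs : ℕ) : ℝ)

/-- The value `L(ξ) = ℓ_0 ξ_0 + ⋯ + ℓ_r ξ_r` of an integer linear form at `ξ`. -/
def evalLF {n : ℕ} (L : Fin n → ℤ) (ξ : Fin n → ℝ) : ℝ :=
  ∑ i, (L i : ℝ) * ξ i

/-- `ω_0(ξ)`: the supremum (in the extended reals) of all `ω > 0` such that there are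
infinitely many integer tuples `q` with `|q_i ξ_j - q_j ξ_i| ≤ (max_k |q_k|)^{-ω}`
for all `i < j`. -/
noncomputable def omega0 {n : ℕ} (ξ : Fin n → ℝ) : EReal :=
  sSup {x : EReal | ∃ ω : ℝ, 0 < ω ∧ x = (ω : EReal) ∧
    {q : Fin n → ℤ | ∀ i j : Fin n, i < j →
      |(q i : ℝ) * ξ j - (q j : ℝ) * ξ i| ≤
        ((Finset.univ.sup fun k => (q k).natAbs : ℕ) : ℝ) ^ (-ω)}.Infinite}

/-- The set `T_r(ξ)` of all `τ > 0` for which there is a sequence `(L_n)` of integer linear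
forms with `L_n(ξ) ≠ 0`, `L_n(ξ) → 0`, `|L_{n+1}(ξ)| = |L_n(ξ)|^{1+o(1)}` and
`|L_n(ξ)| ≤ H(L_n)^{-τ+o(1)}`. -/
def TSetR (r : ℕ) (ξ : Fin (r + 1) → ℝ) : Set ℝ :=
  {τ : ℝ | 0 < τ ∧ ∃ L : ℕ → Fin (r + 1) → ℤ, (∀ n, evalLF (L n) ξ ≠ 0) ∧
    Tendsto (fun n => evalLF (L n) ξ) atTop (𝓝 0) ∧
    (∃ δ : ℕ → ℝ, Tendsto δ atTop (𝓝 0) ∧ ∀ n,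
      |evalLF (L (n + 1)) ξ| = |evalLF (L n) ξ| ^ (1 + δ n)) ∧
    (∃ δ : ℕ → ℝ, Tendsto δ atTop (𝓝 0) ∧ ∀ n,
      |evalLF (L n) ξ| ≤ heightLF (L n) ^ (-τ + δ n))}

/-- The set `T_r'(ξ)` of all `τ > 0` for which there are a sequence `(L_n)` of integer linear
forms and `0 < α < 1 < β` with `|L_n(ξ)|^{1/n} → α`, `limsup H(L_n)^{1/n} ≤ β` and
`τ = -log α / log β`. -/
def TSetR' (r : ℕ) (ξ : Fin (r + 1) → ℝ) : Set ℝ :=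
  {τ : ℝ | 0 < τ ∧ ∃ L : ℕ → Fin (r + 1) → ℤ, ∃ α β : ℝ, 0 < α ∧ α < 1 ∧ 1 < β ∧
    Tendsto (fun n => |evalLF (L n) ξ| ^ (1 / (n : ℝ))) atTop (𝓝 α) ∧
    limsup (fun n => ((heightLF (L n) ^ (1 / (n : ℝ)) : ℝ) : EReal)) atTop ≤ (β : EReal) ∧
    τ = -Real.log α / Real.log β}

/-- The set `T_r''(ξ)` of all `τ > 0` such that for every increasing sequence `(Q_n)` of
positive integers, there is a sequence `(L_n)` of integer linear forms with
`H(L_n) ≤ Q_n^{1+o(1)}` and `|L_n(ξ)| = Q_n^{-τ+o(1)}`. -/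
def TSetR'' (r : ℕ) (ξ : Fin (r + 1) → ℝ) : Set ℝ :=
  {τ : ℝ | 0 < τ ∧ ∀ Q : ℕ → ℕ, StrictMono Q → (∀ n, 0 < Q n) →
    ∃ L : ℕ → Fin (r + 1) → ℤ,
      (∃ δ : ℕ → ℝ, Tendsto δ atTop (𝓝 0) ∧ ∀ n,
        heightLF (L n) ≤ (Q n : ℝ) ^ (1 + δ n)) ∧
      (∃ δ : ℕ → ℝ, Tendsto δ atTop (𝓝 0) ∧ ∀ n,
        |evalLF (L n) ξ| = (Q n : ℝ) ^ (-τ + δ n))}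

/-- The set `T_r'''(ξ)` of all `τ > 0` such that for all sequences `(Q_n)`, `(ε_n)` of
positive reals with `Q_n → ∞`, `ε_n → 0` and `ε_n ≥ Q_n^{-τ+o(1)}`, there is a sequence
`(L_n)` of integer linear forms with `H(L_n)/Q_n → 1` and `L_n(ξ)/ε_n → 1`. -/
def TSetR''' (r : ℕ) (ξ : Fin (r + 1) → ℝ) : Set ℝ :=
  {τ : ℝ | 0 < τ ∧ ∀ Q ε : ℕ → ℝ, (∀ n, 0 < Q n) → (∀ n, 0 < ε n) →
    Tendsto Q atTop atTop → Tendsto ε atTop (𝓝 0) →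
    (∃ δ : ℕ → ℝ, Tendsto δ atTop (𝓝 0) ∧ ∀ n, ε n ≥ Q n ^ (-τ + δ n)) →
    ∃ L : ℕ → Fin (r + 1) → ℤ,
      Tendsto (fun n => heightLF (L n) / Q n) atTop (𝓝 1) ∧
      Tendsto (fun n => evalLF (L n) ξ / ε n) atTop (𝓝 1)}

/-- `τ_r(ξ) = sup T_r(ξ)` (with `sup ∅ = 0`, as for the real `sSup`). -/
noncomputable def tauR (r : ℕ) (ξ : Fin (r + 1) → ℝ) : ℝ := sSup (TSetR r ξ)

/-- `τ_r'(ξ) = sup T_r'(ξ)` (with `sup ∅ = 0`, as for the real `sSup`). -/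
noncomputable def tauR' (r : ℕ) (ξ : Fin (r + 1) → ℝ) : ℝ := sSup (TSetR' r ξ)

/-- `τ_r''(ξ) = sup T_r''(ξ)` (with `sup ∅ = 0`, as for the real `sSup`). -/
noncomputable def tauR'' (r : ℕ) (ξ : Fin (r + 1) → ℝ) : ℝ := sSup (TSetR'' r ξ)

/-- `τ_r'''(ξ) = sup T_r'''(ξ)` (with `sup ∅ = 0`, as for the real `sSup`). -/
noncomputable def tauR''' (r : ℕ) (ξ : Fin (r + 1) → ℝ) : ℝ := sSup (TSetR''' r ξ)

/-!
Let `τ ∈ T_r(ξ)` and let `ω` be an exponent for which infinitely many integer points `q` satisfy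
`|q_i ξ_j - q_j ξ_i| ≤ X^{-ω}`, `X = H(q)`; suppose `τω > 1` and fix a small `ε > 0`. As
`|L_{n+1}(ξ)| = |L_n(ξ)|^{1+o(1)}`, the sequence cannot jump over the window
`[X^{-(1+ε)²}, X^{-(1+ε)}]`, so some form `L` of it has `|L(ξ)|` in that window and hence
`H(L) ≤ X^{(1+ε)²/(τ-ε)}`. The integer `S = ∑ ℓ_j q_j` satisfies
`ξ_i S - q_i L(ξ) = ∑_j ℓ_j (q_j ξ_i - q_i ξ_j) = O(H(L) X^{-ω})`. If `S ≠ 0` this forces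
`|ξ_i| → 0` as `X → ∞` (take `ξ_i ≠ 0`); if `S = 0` it gives `X |L(ξ)| = O(H(L) X^{-ω})`, which
contradicts the lower bound on `|L(ξ)|`. Hence `τω ≤ 1`. Taking suprema needs `ω_0(ξ) > 0`, which
follows from simultaneous Dirichlet approximation of the ratios `ξ_j / ξ_k`, one of which is
irrational because `dim_ℚ ≥ 2`.
-/

lemma heightLF_nonneg {n : ℕ} (L : Fin n → ℤ) : 0 ≤ heightLF L := Nat.cast_nonneg _

lemma abs_le_heightLF {n : ℕ} (L : Fin n → ℤ) (i : Fin n) : |(L i : ℝ)| ≤ heightLF L := by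
  rw [heightLF, ← Int.cast_abs, ← Nat.cast_natAbs]
  exact_mod_cast Finset.le_sup (f := fun i => (L i).natAbs) (Finset.mem_univ i)

lemma exists_abs_eq_heightLF {n : ℕ} [NeZero n] (L : Fin n → ℤ) :
    ∃ i, |(L i : ℝ)| = heightLF L := by
  obtain ⟨i, -, hi⟩ :=
    Finset.exists_mem_eq_sup Finset.univ Finset.univ_nonempty fun i => (L i).natAbs
  exact ⟨i, by rw [heightLF, hi, Nat.cast_natAbs, Int.cast_abs]⟩

lemma one_le_heightLF {n : ℕ} {L : Fin n → ℤ} {ξ : Fin n → ℝ} (h : evalLF L ξ ≠ 0) :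
    1 ≤ heightLF L := by
  obtain ⟨i, hi⟩ : ∃ i, L i ≠ 0 := by
    by_contra! h0
    exact h (by simp [evalLF, h0])
  calc (1 : ℝ) ≤ |(L i : ℝ)| := by exact_mod_cast Int.one_le_abs hi
    _ ≤ heightLF L := abs_le_heightLF L i

lemma finite_setOf_heightLF_le (n : ℕ) (B : ℝ) : {L : Fin n → ℤ | heightLF L ≤ B}.Finite := by
  refine (Set.Finite.pi fun _ : Fin n => Set.finite_Icc (-⌊B⌋) ⌊B⌋).subset fun L hL i _ => ?_
  have := abs_le.1 ((abs_le_heightLF L i).trans hL)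
  constructor
  · have : -(L i) ≤ ⌊B⌋ := Int.le_floor.2 (by push_cast; linarith)
    omega
  · exact Int.le_floor.2 this.2

lemma Set.Infinite.exists_le_heightLF {n : ℕ} {S : Set (Fin n → ℤ)} (hS : S.Infinite) (B : ℝ) :
    ∃ q ∈ S, B ≤ heightLF q := by
  by_contra! h
  exact hS ((finite_setOf_heightLF_le n B).subset fun q hq => (h q hq).le)

theorem exists_nat_int_abs_mul_sub_lt {m : ℕ} (θ : Fin m → ℝ) {N : ℕ} (hN : 0 < N) :
    ∃ Q : ℕ, 0 < Q ∧ Q ≤ N ^ m ∧ ∃ p : Fin m → ℤ, ∀ j, |Q * θ j - p j| < 1 / N := by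
  have hN' : (0 : ℝ) < N := by exact_mod_cast hN
  have hcell : ∀ x : ℝ, ⌊Int.fract x * N⌋₊ < N := fun x =>
    (Nat.floor_lt (by positivity)).2 (mul_lt_of_lt_one_left hN' (Int.fract_lt_one x))
  let cell : Fin (N ^ m + 1) → Fin m → Fin N := fun q j => ⟨_, hcell ((q : ℕ) * θ j)⟩
  obtain ⟨a, b, hab, hcell_eq⟩ := Fintype.exists_ne_map_eq_of_card_lt cell (by simp)
  wlog hlt : a < b generalizing a b
  · exact this b a hab.symm hcell_eq.symm (hab.lt_or_gt.resolve_left hlt)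
  refine ⟨b - a, by omega, by omega,
    fun j => ⌊((b : ℕ) : ℝ) * θ j⌋ - ⌊((a : ℕ) : ℝ) * θ j⌋, fun j => ?_⟩
  have hfloor : ⌊Int.fract (((b : ℕ) : ℝ) * θ j) * N⌋ = ⌊Int.fract (((a : ℕ) : ℝ) * θ j) * N⌋ := by
    rw [← Int.natCast_floor_eq_floor (by positivity), ← Int.natCast_floor_eq_floor (by positivity)]
    exact congrArg (fun f => ((f j : ℕ) : ℤ)) hcell_eq.symm
  have := Int.abs_sub_lt_one_of_floor_eq_floor hfloor
  rw [← sub_mul, abs_mul, abs_of_pos hN', ← lt_div_iff₀ hN'] at this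
  refine lt_of_eq_of_lt (congrArg abs ?_) this
  simp only [Int.fract]
  push_cast [Nat.cast_sub (by omega : (a : ℕ) ≤ b)]
  ring

lemma eventually_mul_rpow_lt_mul_rpow {a b : ℝ} (hab : a < b) (C : ℝ) {D : ℝ} (hD : 0 < D) :
    ∀ᶠ x : ℝ in atTop, C * x ^ a < D * x ^ b := by
  have hlim : Tendsto (fun x : ℝ => C / D * x ^ (-(b - a))) atTop (𝓝 0) := by
    simpa using (tendsto_rpow_neg_atTop (sub_pos.2 hab)).const_mul (C / D)
  filter_upwards [hlim.eventually (gt_mem_nhds one_pos), eventually_gt_atTop 0] with x hx hx0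
  have hxb : 0 < D * x ^ b := by positivity
  calc C * x ^ a = D * x ^ b * (C / D * x ^ (-(b - a))) := by
        rw [Real.rpow_neg hx0.le, Real.rpow_sub hx0]
        field_simp
    _ < D * x ^ b * 1 := by gcongr
    _ = D * x ^ b := mul_one _

lemma Set.infinite_of_forall_exists_pos_lt {α : Type*} {S : Set α} (e : α → ℝ)
    (h : ∀ ε > 0, ∃ x ∈ S, 0 < e x ∧ e x < ε) : S.Infinite := by
  intro hS
  obtain ⟨x, hx, hmin⟩ := (hS.toFinset.filter (0 < e ·)).exists_min_image e <| by
    obtain ⟨x, hx, hpos, -⟩ := h 1 one_pos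
    exact ⟨x, by simp [hx, hpos]⟩
  simp only [Finset.mem_filter, Set.Finite.mem_toFinset] at hx hmin
  obtain ⟨y, hy, hpos, hlt⟩ := h (e x) hx.2
  exact (hmin y ⟨hy, hpos⟩).not_gt hlt

/-- `omega0 ξ` is the supremum of the `ω > 0` for which this set is infinite. -/
def goodApprox {n : ℕ} (ξ : Fin n → ℝ) (ω : ℝ) : Set (Fin n → ℤ) :=
  {q | ∀ i j : Fin n, i < j → |(q i : ℝ) * ξ j - (q j : ℝ) * ξ i| ≤ heightLF q ^ (-ω)}

lemma abs_mul_sub_mul_le_of_mem_goodApprox {n : ℕ} {ξ : Fin n → ℝ} {ω : ℝ} {q : Fin n → ℤ}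
    (hq : q ∈ goodApprox ξ ω) (i j : Fin n) :
    |(q i : ℝ) * ξ j - (q j : ℝ) * ξ i| ≤ heightLF q ^ (-ω) := by
  rcases lt_trichotomy i j with h | rfl | h
  · exact hq i j h
  · simpa using Real.rpow_nonneg (heightLF_nonneg q) _
  · rw [abs_sub_comm]
    exact hq j i h

lemma exists_irrational_div_of_two_le_finrank {n : ℕ} {ξ : Fin n → ℝ}
    (hdim : 2 ≤ Module.finrank ℚ (Submodule.span ℚ (Set.range ξ))) :
    ∃ k j, ξ k ≠ 0 ∧ Irrational (ξ j / ξ k) := by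
  by_contra! h
  obtain ⟨v, hv⟩ : ∃ v : ℝ, Set.range ξ ⊆ Submodule.span ℚ {v} := by
    by_cases h0 : ∃ k, ξ k ≠ 0
    · obtain ⟨k, hk⟩ := h0
      refine ⟨ξ k, Set.range_subset_iff.2 fun j => Submodule.mem_span_singleton.2 ?_⟩
      obtain ⟨c, hc⟩ : ξ j / ξ k ∈ Set.range ((↑) : ℚ → ℝ) := not_not.1 (h k j hk)
      exact ⟨c, by rw [Rat.smul_def, hc, div_mul_cancel₀ _ hk]⟩
    · push Not at h0
      exact ⟨0, Set.range_subset_iff.2 fun j => by simp [h0 j]⟩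
  have := (Submodule.finrank_mono (Submodule.span_le.2 hv)).trans
    (finrank_span_le_card ({v} : Set ℝ))
  simp at this
  omega

lemma abs_mul_sub_mul_le_of_abs_sub_mul_div_le {n : ℕ} {ξ : Fin n → ℝ} {k : Fin n}
    (hk : ξ k ≠ 0) {Q η : ℝ} {p : Fin n → ℤ} (hp : ∀ j, |(p j : ℝ) - Q * (ξ j / ξ k)| ≤ η)
    (i j : Fin n) : |(p i : ℝ) * ξ j - p j * ξ i| ≤ η * (|ξ i| + |ξ j|) := by
  have hid : (p i : ℝ) * ξ j - p j * ξ i =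
      (p i - Q * (ξ i / ξ k)) * ξ j - (p j - Q * (ξ j / ξ k)) * ξ i := by
    field_simp
    ring
  rw [hid]
  calc _ ≤ |((p i : ℝ) - Q * (ξ i / ξ k)) * ξ j| + |((p j : ℝ) - Q * (ξ j / ξ k)) * ξ i| :=
        abs_sub _ _
    _ ≤ η * |ξ j| + η * |ξ i| := by
        rw [abs_mul, abs_mul]
        gcongr
        exacts [hp i, hp j]
    _ = η * (|ξ i| + |ξ j|) := by ring

lemma exists_approx_point_of_irrational_div {n : ℕ} {ξ : Fin n → ℝ} {k j₀ : Fin n}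
    (hk : ξ k ≠ 0) (hirr : Irrational (ξ j₀ / ξ k)) :
    ∃ A B : ℝ, 0 < A ∧ ∀ N : ℕ, 0 < N → ∃ p : Fin n → ℤ,
      1 ≤ heightLF p ∧ heightLF p ≤ A * N ^ n ∧
      (∀ i j, |(p i : ℝ) * ξ j - p j * ξ i| ≤ B / N) ∧ 0 < |(p k : ℝ) * ξ j₀ - p j₀ * ξ k| := by
  have : NeZero n := ⟨k.pos.ne'⟩
  have hsum : ∀ (f : Fin n → ℝ) (i : Fin n), |f i| ≤ ∑ j, |f j| := fun f i =>
    Finset.single_le_sum (f := fun j => |f j|) (fun j _ => abs_nonneg (f j)) (Finset.mem_univ i)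
  refine ⟨∑ j, |ξ j / ξ k| + 1, 2 * ∑ j, |ξ j|, by positivity, fun N hN => ?_⟩
  have hN' : (1 : ℝ) ≤ N := by exact_mod_cast hN
  obtain ⟨Q, hQ, hQN, p, hp⟩ := exists_nat_int_abs_mul_sub_lt (fun j => ξ j / ξ k) hN
  have herr : ∀ j, |(p j : ℝ) - Q * (ξ j / ξ k)| ≤ 1 / N := fun j => by
    rw [abs_sub_comm]
    exact (hp j).le
  have hpk : p k = Q := by
    have h1 : |((Q - p k : ℤ) : ℝ)| < 1 := by
      simpa [hk] using (hp k).trans_le ((div_le_one (by positivity)).2 hN')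
    have := abs_lt.1 (show |(Q - p k : ℤ)| < 1 by exact_mod_cast h1)
    omega
  refine ⟨p, ?_, ?_, fun i j => ?_, ?_⟩
  · calc (1 : ℝ) ≤ |((Q : ℤ) : ℝ)| := by simpa using Nat.one_le_iff_ne_zero.2 hQ.ne'
      _ = |(p k : ℝ)| := by rw [hpk]
      _ ≤ heightLF p := abs_le_heightLF p k
  · obtain ⟨i, hi⟩ := exists_abs_eq_heightLF p
    have hQ' : (Q : ℝ) ≤ N ^ n := by exact_mod_cast hQN
    have hNn : (1 : ℝ) ≤ N ^ n := one_le_pow₀ hN'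
    rw [← hi]
    calc |(p i : ℝ)| ≤ |(p i : ℝ) - Q * (ξ i / ξ k)| + |Q * (ξ i / ξ k)| := by
          linarith [abs_sub_abs_le_abs_sub (p i : ℝ) (Q * (ξ i / ξ k))]
      _ ≤ 1 + N ^ n * ∑ j, |ξ j / ξ k| := by
        rw [abs_mul, Nat.abs_cast]
        gcongr
        · exact (herr i).trans (div_le_one_of_le₀ hN' (by positivity))
        · exact hsum (fun j => ξ j / ξ k) i
      _ ≤ (∑ j, |ξ j / ξ k| + 1) * N ^ n := by
        nlinarith [Finset.sum_nonneg fun j (_ : j ∈ Finset.univ) => abs_nonneg (ξ j / ξ k)]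
  · calc _ ≤ 1 / N * (|ξ i| + |ξ j|) := abs_mul_sub_mul_le_of_abs_sub_mul_div_le hk herr i j
      _ ≤ 1 / N * (∑ j, |ξ j| + ∑ j, |ξ j|) := by gcongr <;> exact hsum ξ _
      _ = (2 * ∑ j, |ξ j|) / N := by ring
  · have hid : (p k : ℝ) * ξ j₀ - p j₀ * ξ k = ξ k * (Q * (ξ j₀ / ξ k) - p j₀) := by
      rw [hpk]
      field_simp
      push_cast
      ring
    rw [hid, abs_mul]
    refine mul_pos (abs_pos.2 hk) (abs_pos.2 (sub_ne_zero.2 ?_))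
    exact (hirr.natCast_mul hQ.ne').ne_int (p j₀)

theorem exists_pos_goodApprox_infinite {n : ℕ} {ξ : Fin n → ℝ} {k j₀ : Fin n} (hk : ξ k ≠ 0)
    (hirr : Irrational (ξ j₀ / ξ k)) : ∃ ω, 0 < ω ∧ (goodApprox ξ ω).Infinite := by
  obtain ⟨A, B, hA, happrox⟩ := exists_approx_point_of_irrational_div hk hirr
  have hn : (0 : ℝ) < n := by exact_mod_cast k.pos
  set ω : ℝ := 1 / (2 * n)
  refine ⟨ω, by positivity, Set.infinite_of_forall_exists_pos_lt
    (fun q => |(q k : ℝ) * ξ j₀ - q j₀ * ξ k|) fun ε hε => ?_⟩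
  have hrate : ∀ᶠ x : ℝ in atTop, B * x ^ (-1 : ℝ) < A ^ (-ω) * x ^ (-(1 / 2) : ℝ) :=
    eventually_mul_rpow_lt_mul_rpow (by norm_num) B (by positivity)
  obtain ⟨N, ⟨hrateN, hsmallN⟩, hN⟩ := ((tendsto_natCast_atTop_atTop.eventually hrate).and
    ((tendsto_const_div_atTop_nhds_zero_nat B).eventually (gt_mem_nhds hε)) |>.and
    (eventually_gt_atTop 0)).exists
  obtain ⟨p, hp1, hpA, hcross, hpos⟩ := happrox N hN
  have hN' : (0 : ℝ) < N := by exact_mod_cast hN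
  -- `H(p)^{-ω} ≥ (A N^n)^{-ω} = A^{-ω} N^{-1/2}`, which beats `B / N`.
  have hbound : B / N ≤ heightLF p ^ (-ω) := calc
    B / N = B * (N : ℝ) ^ (-1 : ℝ) := by rw [Real.rpow_neg_one, div_eq_mul_inv]
    _ ≤ A ^ (-ω) * (N : ℝ) ^ (-(1 / 2) : ℝ) := hrateN.le
    _ = (A * N ^ n) ^ (-ω) := by
      rw [Real.mul_rpow hA.le (by positivity), ← Real.rpow_natCast_mul hN'.le]
      congr 2
      simp only [ω]
      field_simp
    _ ≤ heightLF p ^ (-ω) :=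
      Real.rpow_le_rpow_of_nonpos (by linarith) hpA (by simp only [ω]; rw [neg_nonpos]; positivity)
  exact ⟨p, fun i j _ => (hcross i j).trans hbound, hpos, (hcross k j₀).trans_lt hsmallN⟩

lemma exists_small_exponent {τ ω : ℝ} (hτ : 0 < τ) (h : 1 < τ * ω) :
    ∃ ε, 0 < ε ∧ ε < τ ∧ (1 + ε) ^ 2 / (τ - ε) < ω ∧
      (1 + ε) ^ 2 / (τ - ε) + (1 + ε) ^ 2 < ω + 1 := by
  have hcont : ContinuousAt (fun e : ℝ => (1 + e) ^ 2 / (τ - e)) 0 := by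
    fun_prop (disch := simp [hτ.ne'])
  have h0 : (1 + 0) ^ 2 / (τ - 0) < ω := by
    rw [add_zero, one_pow, sub_zero, div_lt_iff₀ hτ]
    linarith
  have h1 := hcont.eventually_lt continuousAt_const h0
  have h2 := (hcont.add (by fun_prop : ContinuousAt (fun e : ℝ => (1 + e) ^ 2) 0)).eventually_lt
    continuousAt_const (by simpa using h0 : (1 + 0) ^ 2 / (τ - 0) + (1 + 0) ^ 2 < ω + 1)
  obtain ⟨ε, ⟨⟨hε1, hε2⟩, hετ⟩, hε⟩ := ((((h1.and h2).and (eventually_lt_nhds hτ)).filter_mono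
    nhdsWithin_le_nhds).and (self_mem_nhdsWithin : ∀ᶠ e in 𝓝[>] (0 : ℝ), e ∈ Set.Ioi 0)).exists
  exact ⟨ε, hε, hετ, hε1, hε2⟩

lemma eventually_exists_rpow_le_le {a δ : ℕ → ℝ} (ha : ∀ n, 0 < a n)
    (hlim : Tendsto a atTop (𝓝 0)) (hδ : Tendsto δ atTop (𝓝 0))
    (hrec : ∀ n, a (n + 1) = a n ^ (1 + δ n)) {P : ℕ → Prop} (hP : ∀ᶠ n in atTop, P n)
    {ε : ℝ} (hε : 0 < ε) : ∀ᶠ y in 𝓝[>] 0, ∃ n, P n ∧ y ^ (1 + ε) ≤ a n ∧ a n ≤ y := by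
  obtain ⟨N, hN⟩ := eventually_atTop.1 (hP.and (hδ.eventually (Ioo_mem_nhds neg_one_lt_zero hε)))
  have hstart : ∀ᶠ y in 𝓝[>] (0 : ℝ), y < 1 ∧ ∀ m ∈ Set.Iic N, y < a m :=
    nhdsWithin_le_nhds <| (eventually_lt_nhds one_pos).and <|
      (Filter.eventually_all_finite (Set.finite_Iic N)).2 fun m _ => eventually_lt_nhds (ha m)
  filter_upwards [hstart, self_mem_nhdsWithin] with y ⟨hy1, hyN⟩ (hy0 : 0 < y)
  classical
  have hex : ∃ n, a n ≤ y := (hlim.eventually (eventually_le_nhds hy0)).exists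
  have hNlt : N < Nat.find hex := not_le.1 fun h => (hyN _ h).not_ge (Nat.find_spec hex)
  obtain ⟨m, hm⟩ : ∃ m, Nat.find hex = m + 1 := ⟨Nat.find hex - 1, by omega⟩
  have hprev : y < a m := not_le.1 (Nat.find_min hex (by omega))
  obtain ⟨-, hδm⟩ := hN m (by omega)
  refine ⟨m + 1, (hN (m + 1) (by omega)).1, ?_, hm ▸ Nat.find_spec hex⟩
  calc y ^ (1 + ε) ≤ y ^ (1 + δ m) :=
        Real.rpow_le_rpow_of_exponent_ge hy0 hy1.le (by linarith [hδm.2])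
    _ ≤ a m ^ (1 + δ m) := Real.rpow_le_rpow hy0.le hprev.le (by linarith [hδm.1])
    _ = a (m + 1) := (hrec m).symm

lemma eventually_le_rpow_neg_inv {h a δ : ℕ → ℝ} {τ ε : ℝ} (hh : ∀ n, 1 ≤ h n)
    (ha : ∀ n, 0 < a n) (hδ : Tendsto δ atTop (𝓝 0)) (hle : ∀ n, a n ≤ h n ^ (-τ + δ n))
    (hε : 0 < ε) (hετ : ε < τ) : ∀ᶠ n in atTop, h n ≤ a n ^ (-(τ - ε)⁻¹) := by
  filter_upwards [hδ.eventually (eventually_le_nhds hε)] with n hn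
  have h1 : a n ≤ h n ^ (-(τ - ε)) :=
    (hle n).trans (Real.rpow_le_rpow_of_exponent_le (hh n) (by linarith))
  calc h n = (h n ^ (-(τ - ε))) ^ (-(τ - ε)⁻¹) := by
        rw [← Real.rpow_mul (by linarith [hh n]), neg_mul_neg,
          mul_inv_cancel₀ (sub_pos.2 hετ).ne', Real.rpow_one]
    _ ≤ a n ^ (-(τ - ε)⁻¹) :=
        Real.rpow_le_rpow_of_nonpos (ha n) h1 (neg_nonpos.2 (inv_nonneg.2 (by linarith)))

lemma eventually_exists_form_of_mem_TSetR {r : ℕ} {ξ : Fin (r + 1) → ℝ} {τ ε : ℝ}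
    (hτ : τ ∈ TSetR r ξ) (hε : 0 < ε) (hετ : ε < τ) :
    ∀ᶠ X : ℝ in atTop, ∃ L : Fin (r + 1) → ℤ, X ^ (-(1 + ε) ^ 2) ≤ |evalLF L ξ| ∧
      |evalLF L ξ| ≤ X ^ (-(1 + ε)) ∧ heightLF L ≤ X ^ ((1 + ε) ^ 2 / (τ - ε)) := by
  obtain ⟨-, L, hL0, hLlim, ⟨δ, hδ, hrec⟩, ⟨δ', hδ', hH⟩⟩ := hτ
  have ha : ∀ n, 0 < |evalLF (L n) ξ| := fun n => abs_pos.2 (hL0 n)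
  have hgap := eventually_exists_rpow_le_le ha (by simpa using hLlim.abs) hδ hrec
    (eventually_le_rpow_neg_inv (fun n => one_le_heightLF (hL0 n)) ha hδ' hH hε hετ) hε
  have hscale : Tendsto (fun X : ℝ => X ^ (-(1 + ε))) atTop (𝓝[>] 0) :=
    tendsto_nhdsWithin_iff.2 ⟨tendsto_rpow_neg_atTop (by linarith),
      (eventually_gt_atTop 0).mono fun X hX => Real.rpow_pos_of_pos hX _⟩
  filter_upwards [hscale.eventually hgap, eventually_gt_atTop 0] with X ⟨n, hHn, hlow, hup⟩ hX
  have hlow' : X ^ (-(1 + ε) ^ 2) ≤ |evalLF (L n) ξ| := by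
    rwa [← Real.rpow_mul hX.le, show -(1 + ε) * (1 + ε) = -(1 + ε) ^ 2 by ring] at hlow
  refine ⟨L n, hlow', hup, hHn.trans ?_⟩
  calc |evalLF (L n) ξ| ^ (-(τ - ε)⁻¹) ≤ (X ^ (-(1 + ε) ^ 2)) ^ (-(τ - ε)⁻¹) :=
        Real.rpow_le_rpow_of_nonpos (by positivity) hlow'
          (neg_nonpos.2 (inv_nonneg.2 (by linarith)))
    _ = X ^ ((1 + ε) ^ 2 / (τ - ε)) := by
        rw [← Real.rpow_mul hX.le]
        congr 1
        ring

lemma abs_mul_sub_mul_evalLF_le {n : ℕ} (L q : Fin n → ℤ) (ξ : Fin n → ℝ) {η : ℝ}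
    (hq : ∀ i j, |(q i : ℝ) * ξ j - q j * ξ i| ≤ η) (i : Fin n) :
    |ξ i * ((∑ j, L j * q j : ℤ) : ℝ) - q i * evalLF L ξ| ≤ n * heightLF L * η := by
  have hid : ξ i * ((∑ j, L j * q j : ℤ) : ℝ) - q i * evalLF L ξ =
      ∑ j, (L j : ℝ) * (q j * ξ i - q i * ξ j) := by
    simp only [evalLF, Int.cast_sum, Int.cast_mul, Finset.mul_sum, ← Finset.sum_sub_distrib]
    exact Finset.sum_congr rfl fun j _ => by ring
  rw [hid]
  calc _ ≤ ∑ j, |(L j : ℝ) * (q j * ξ i - q i * ξ j)| := Finset.abs_sum_le_sum_abs _ _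
    _ ≤ ∑ _j : Fin n, heightLF L * η := Finset.sum_le_sum fun j _ => by
        rw [abs_mul]
        exact mul_le_mul (abs_le_heightLF L j) (hq j i) (abs_nonneg _) (heightLF_nonneg L)
    _ = n * heightLF L * η := by simp [mul_assoc]

lemma abs_le_or_abs_mul_le {n : ℕ} (L q : Fin n → ℤ) (ξ : Fin n → ℝ) {η : ℝ}
    (hq : ∀ i j, |(q i : ℝ) * ξ j - q j * ξ i| ≤ η) :
    (∀ i, |ξ i| ≤ |(q i : ℝ)| * |evalLF L ξ| + n * heightLF L * η) ∨
      ∀ i, |(q i : ℝ)| * |evalLF L ξ| ≤ n * heightLF L * η := by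
  rcases eq_or_ne (∑ j, L j * q j) 0 with hS | hS
  · right
    intro i
    simpa [hS, abs_mul] using abs_mul_sub_mul_evalLF_le L q ξ hq i
  · left
    intro i
    have h1 : (1 : ℝ) ≤ |((∑ j, L j * q j : ℤ) : ℝ)| := by exact_mod_cast Int.one_le_abs hS
    have h2 := abs_sub_abs_le_abs_sub (ξ i * ((∑ j, L j * q j : ℤ) : ℝ)) (q i * evalLF L ξ)
    rw [abs_mul, abs_mul] at h2
    linarith [le_mul_of_one_le_right (abs_nonneg (ξ i)) h1, abs_mul_sub_mul_evalLF_le L q ξ hq i]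

theorem mul_le_one_of_mem_TSetR {r : ℕ} {ξ : Fin (r + 1) → ℝ} {i₀ : Fin (r + 1)}
    (hi₀ : ξ i₀ ≠ 0) {τ ω : ℝ} (hτ : τ ∈ TSetR r ξ) (hω : (goodApprox ξ ω).Infinite) :
    τ * ω ≤ 1 := by
  by_contra! h
  obtain ⟨ε, hε, hετ, hκω, hκρ⟩ := exists_small_exponent hτ.1 h
  set ρ := (1 + ε) ^ 2
  set κ := ρ / (τ - ε)
  have hbig : ∀ᶠ X : ℝ in atTop, X ^ (-ε) + (r + 1) * X ^ (κ - ω) < |ξ i₀| := by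
    have hlim : Tendsto (fun X : ℝ => X ^ (-ε) + (r + 1) * X ^ (-(ω - κ))) atTop (𝓝 0) := by
      simpa using (tendsto_rpow_neg_atTop hε).add
        ((tendsto_rpow_neg_atTop (sub_pos.2 hκω)).const_mul (r + 1 : ℝ))
    simpa using hlim.eventually (gt_mem_nhds (abs_pos.2 hi₀))
  have hsmall : ∀ᶠ X : ℝ in atTop, (r + 1) * X ^ (κ - ω) < 1 * X ^ (1 - ρ) :=
    eventually_mul_rpow_lt_mul_rpow (by linarith) _ one_pos
  obtain ⟨X₀, hX₀⟩ := eventually_atTop.1 ((eventually_exists_form_of_mem_TSetR hτ hε hετ).and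
    (hbig.and (hsmall.and (eventually_gt_atTop 0))))
  obtain ⟨q, hq, hqX⟩ := hω.exists_le_heightLF X₀
  obtain ⟨⟨L, hlow, hup, hHL⟩, hbigX, hsmallX, hX⟩ := hX₀ _ hqX
  set X := heightLF q
  have hHη : (r + 1 : ℝ) * heightLF L * X ^ (-ω) ≤ (r + 1) * X ^ (κ - ω) := by
    rw [sub_eq_add_neg, Real.rpow_add hX, ← mul_assoc]
    gcongr
  rcases abs_le_or_abs_mul_le L q ξ (abs_mul_sub_mul_le_of_mem_goodApprox hq) with h | h
  · have hqL : |(q i₀ : ℝ)| * |evalLF L ξ| ≤ X ^ (-ε) := calc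
      _ ≤ X * X ^ (-(1 + ε)) := mul_le_mul (abs_le_heightLF q i₀) hup (abs_nonneg _) hX.le
      _ = X ^ (-ε) := by rw [show -ε = 1 + -(1 + ε) by ring, Real.rpow_add hX, Real.rpow_one]
    have := h i₀
    push_cast at this
    linarith
  · obtain ⟨i₁, hi₁⟩ := exists_abs_eq_heightLF q
    have hlow' : X ^ (1 - ρ) ≤ X * |evalLF L ξ| := by
      rw [sub_eq_add_neg, Real.rpow_add hX, Real.rpow_one]
      exact mul_le_mul_of_nonneg_left hlow hX.le
    have := h i₁
    rw [hi₁] at this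
    push_cast at this
    linarith

lemma coe_sSup_le_inv_sSup {T : Set ℝ} {P : ℝ → Prop} (hT : ∀ τ ∈ T, 0 < τ)
    (hP : ∃ ω, 0 < ω ∧ P ω) (h : ∀ τ ∈ T, ∀ ω, P ω → τ * ω ≤ 1) :
    ((sSup T : ℝ) : EReal) ≤ (sSup {x : EReal | ∃ ω : ℝ, 0 < ω ∧ x = ω ∧ P ω})⁻¹ := by
  obtain ⟨ω₀, hω₀, hPω₀⟩ := hP
  set W := {x : EReal | ∃ ω : ℝ, 0 < ω ∧ x = ω ∧ P ω}
  have hW : (0 : EReal) < sSup W :=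
    (EReal.coe_pos.2 hω₀).trans_le (le_sSup ⟨ω₀, hω₀, rfl, hPω₀⟩)
  rcases T.eq_empty_or_nonempty with rfl | ⟨τ₁, hτ₁⟩
  · simpa using EReal.inv_nonneg_of_nonneg hW.le
  have hle_inv : ∀ ω, 0 < ω → P ω → ∀ τ ∈ T, τ ≤ ω⁻¹ := fun ω hω hPω τ hτ => by
    rw [← one_div, le_div_iff₀ hω]
    exact h τ hτ ω hPω
  have ht : 0 < sSup T :=
    (hT τ₁ hτ₁).trans_le (le_csSup ⟨ω₀⁻¹, hle_inv ω₀ hω₀ hPω₀⟩ hτ₁)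
  have hWt : sSup W ≤ ((sSup T)⁻¹ : ℝ) := sSup_le <| by
    rintro _ ⟨ω, hω, rfl, hPω⟩
    exact EReal.coe_le_coe_iff.2
      ((le_inv_comm₀ hω ht).2 (csSup_le ⟨τ₁, hτ₁⟩ (hle_inv ω hω hPω)))
  calc ((sSup T : ℝ) : EReal) = (((sSup T)⁻¹ : ℝ) : EReal)⁻¹ := by rw [← EReal.coe_inv, inv_inv]
    _ ≤ (sSup W)⁻¹ := EReal.inv_strictAntiOn.antitoneOn hW (EReal.coe_pos.2 (inv_pos.2 ht)) hWt

theorem tauR_le_inv_omega0_general (r : ℕ) (ξ : Fin (r + 1) → ℝ)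
    (hdim : 2 ≤ Module.finrank ℚ ↥(Submodule.span ℚ (Set.range ξ))) :
    ((tauR r ξ : ℝ) : EReal) ≤ (omega0 ξ)⁻¹ := by
  obtain ⟨k, j₀, hk, hirr⟩ := exists_irrational_div_of_two_le_finrank hdim
  exact coe_sSup_le_inv_sSup (fun τ hτ => hτ.1) (exists_pos_goodApprox_infinite hk hirr)
    fun τ hτ ω hω => mul_le_one_of_mem_TSetR hk hτ hω

theorem tauR_le_inv_omega0 (r : ℕ) (hr : 1 ≤ r) (ξ : Fin (r + 1) → ℝ)
    (hdim : 2 ≤ Module.finrank ℚ ↥(Submodule.span ℚ (Set.range ξ))) :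
    ((tauR r ξ : ℝ) : EReal) ≤ (omega0 ξ)⁻¹ :=
  tauR_le_inv_omega0_general r ξ hdim
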